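/- arXiv:1712.08840 — 2 statements merged into one kernel-verified Lean document; each statement's English description precedes it below -/
import Mathlib

section
/- (Majorant property) Let k ≥ 2 be an integer and ε' ∈ (0,1). There exist C_k > 0 and X_0 such that the following holds for all X ≥ X_0. Let n be an integer with X < n ≤ 2X, write n = n_1 n_2 where n_1 is the product of the prime-power factors p^{v_p(n)} of n over primes p ≤ X^{1/(log log X)^2} and n_2 is the product over primes p > X^{1/(log log X)^2}. If Ω(n) ≤ (1+ε') k log log X and Ω(n_2) ≤ 10 log log log X, then d_k(n) ≤ (log log X)^{C_k} · 𝑑̃_k(n). -/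
/-!
Split `n = n₂ n₁` into its rough part `n₂` (primes above `Y = X^(1/(log log X)^2)`) and its
smooth part `n₁`. Multiplicativity gives `d_k(n) = d_k(n₂) d_k(n₁)`. Since `d_k(p^a) ≤ k^a`,
`d_k(n₂) ≤ k^Ω(n₂) ≤ k^(10 log log log X) = (log log X)^(10 log k)`. On the other side
`d_k(n₁) = ∑_{m ∣ n₁} d_{k-1}(m)`, and every `m ∣ n₁` is counted by `𝑑̃_k(n)`:
`Ω(m) ≤ Ω(n)`, and `m ≤ n₁ ≤ Y^Ω(n) ≤ Y^(2k log log X) = M`.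
-/

open Finset

/-- `dk k n` is the `k`-fold divisor function `d_k(n)`: the number of `k`-tuples of
positive integers with product `n` (for `n ≥ 1`); `dk 0 n = 1_{n = 1}`. -/
def dk : ℕ → ℕ → ℕ
  | 0, n => if n = 1 then 1 else 0
  | k + 1, n => ∑ d ∈ n.divisors, dk k d

/-- `bigOmega n = Ω(n)`, the number of prime factors of `n` counted with multiplicity. -/
def bigOmega (n : ℕ) : ℕ := (Nat.primeFactorsList n).length

/-- `Mval k X = M := X^(2k / log log X)`. -/
noncomputable def Mval (k : ℕ) (X : ℝ) : ℝ := X ^ ((2 * (k : ℝ)) / Real.log (Real.log X))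

/-- The modified divisor function
`𝑑̃_k(n) := 1_{(X, 2X]}(n) · ∑_{m ∣ n, m ≤ M, Ω(m) ≤ (1+ε')k log log X} d_{k−1}(m)`. -/
noncomputable def dtilde (k : ℕ) (ε' : ℝ) (X : ℝ) (n : ℕ) : ℝ :=
  (if X < (n : ℝ) ∧ (n : ℝ) ≤ 2 * X then 1 else 0) *
    ∑ m ∈ n.divisors.filter (fun m : ℕ => ((m : ℝ) ≤ Mval k X) ∧
        (bigOmega m : ℝ) ≤ (1 + ε') * k * Real.log (Real.log X)), (dk (k - 1) m : ℝ)

/-- `roughPart Y n` is the product of the prime-power factors `p^(v_p(n))` of `n` over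
primes `p > Y`. -/
noncomputable def roughPart (Y : ℝ) (n : ℕ) : ℕ :=
  ∏ p ∈ n.primeFactors.filter (fun p : ℕ => Y < (p : ℝ)), p ^ (n.factorization p)

section DivisorFunction

open ArithmeticFunction
open scoped ArithmeticFunction.zeta

lemma dk_eq_zeta_pow (k n : ℕ) : dk k n = (ζ ^ k : ArithmeticFunction ℕ) n := by
  induction k generalizing n with
  | zero => simp [dk, one_apply]
  | succ k ih => rw [pow_succ', zeta_mul_apply]; simp [dk, ih]

lemma dk_mul_of_coprime (k : ℕ) {a b : ℕ} (h : a.Coprime b) :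
    dk k (a * b) = dk k a * dk k b := by
  simp only [dk_eq_zeta_pow, (isMultiplicative_zeta.pow).map_mul_of_coprime h]

lemma dk_one (k : ℕ) : dk k 1 = 1 := by
  simp [dk_eq_zeta_pow, (isMultiplicative_zeta.pow).map_one]

lemma sum_range_pow_le_succ_pow (k a : ℕ) : ∑ j ∈ range (a + 1), k ^ j ≤ (k + 1) ^ a := by
  induction a with
  | zero => simp
  | succ a ih =>
    have hk : k ^ (a + 1) ≤ (k + 1) ^ a * k :=
      pow_succ k a ▸ Nat.mul_le_mul_right k (Nat.pow_le_pow_left k.le_succ a)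
    rw [sum_range_succ, pow_succ (k + 1), mul_add_one]
    omega

lemma dk_prime_pow_le (k : ℕ) {p : ℕ} (hp : p.Prime) (a : ℕ) : dk k (p ^ a) ≤ k ^ a := by
  induction k generalizing a with
  | zero =>
    rcases a.eq_zero_or_pos with rfl | ha
    · simp [dk]
    · simp [dk, hp.ne_one, ha.ne']
  | succ k ih =>
    rw [dk, Nat.divisors_prime_pow hp, sum_map]
    exact (sum_le_sum fun j _ => ih j).trans (sum_range_pow_le_succ_pow k a)

lemma bigOmega_eq_cardFactors (n : ℕ) : bigOmega n = cardFactors n :=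
  cardFactors_apply.symm

lemma bigOmega_le_of_dvd {m n : ℕ} (hn : n ≠ 0) (h : m ∣ n) : bigOmega m ≤ bigOmega n := by
  obtain ⟨c, rfl⟩ := h
  simp only [bigOmega_eq_cardFactors, cardFactors_mul (left_ne_zero_of_mul hn)
    (right_ne_zero_of_mul hn), Nat.le_add_right]

lemma bigOmega_eq_sum_factorization (n : ℕ) :
    bigOmega n = ∑ p ∈ n.primeFactors, n.factorization p := by
  rw [bigOmega_eq_cardFactors, cardFactors_eq_sum_factorization, Finsupp.sum,
    Nat.support_factorization]

lemma dk_le_pow_bigOmega (k : ℕ) {n : ℕ} (hn : n ≠ 0) : dk k n ≤ k ^ bigOmega n := by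
  induction n using Nat.recOnPrimePow with
  | zero => exact absurd rfl hn
  | one => simp [dk_one, bigOmega]
  | prime_pow_mul a p i hp hpa _ ih =>
    have ha : a ≠ 0 := right_ne_zero_of_mul hn
    rw [dk_mul_of_coprime k ((hp.coprime_iff_not_dvd.mpr hpa).pow_left i),
      bigOmega_eq_cardFactors, cardFactors_mul (pow_ne_zero i hp.ne_zero) ha,
      cardFactors_apply_prime_pow hp, pow_add, ← bigOmega_eq_cardFactors]
    exact Nat.mul_le_mul (dk_prime_pow_le k hp i) (ih ha)

lemma dk_le_sum_divisors_filter {k m n : ℕ} (hk : 0 < k) (hn : n ≠ 0) (hmn : m ∣ n)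
    (P : ℕ → Prop) [DecidablePred P] (hP : ∀ d ∈ m.divisors, P d) :
    dk k m ≤ ∑ d ∈ n.divisors.filter P, dk (k - 1) d := by
  obtain ⟨j, rfl⟩ := Nat.exists_eq_succ_of_ne_zero hk.ne'
  exact sum_le_sum_of_subset fun d hd =>
    mem_filter.mpr ⟨Nat.divisors_subset_of_dvd hn hmn hd, hP d hd⟩

end DivisorFunction

section SmoothRoughSplitting

noncomputable def smoothPart (Y : ℝ) (n : ℕ) : ℕ :=
  ∏ p ∈ n.primeFactors.filter (fun p : ℕ => ¬ Y < (p : ℝ)), p ^ n.factorization p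

variable (Y : ℝ) {n : ℕ}

lemma roughPart_mul_smoothPart (hn : n ≠ 0) : roughPart Y n * smoothPart Y n = n := by
  rw [roughPart, smoothPart, prod_filter_mul_prod_filter_not]
  exact Nat.prod_factorization_pow_eq_self hn

lemma coprime_roughPart_smoothPart : (roughPart Y n).Coprime (smoothPart Y n) := by
  refine Nat.Coprime.prod_left fun p hp => Nat.Coprime.prod_right fun q hq => ?_
  obtain ⟨hp, hpY⟩ := mem_filter.mp hp
  obtain ⟨hq, hqY⟩ := mem_filter.mp hq
  have hpq : p ≠ q := by rintro rfl; exact hqY hpY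
  exact ((Nat.coprime_primes (Nat.prime_of_mem_primeFactors hp)
    (Nat.prime_of_mem_primeFactors hq)).mpr hpq).pow _ _

lemma smoothPart_le_pow_bigOmega (hY : 1 ≤ Y) : (smoothPart Y n : ℝ) ≤ Y ^ bigOmega n := by
  rw [smoothPart, bigOmega_eq_sum_factorization, Nat.cast_prod,
    ← sum_filter_add_sum_filter_not _ (fun p : ℕ => ¬ Y < (p : ℝ)), pow_add,
    ← prod_pow_eq_pow_sum]
  refine le_trans ?_ (le_mul_of_one_le_right (by positivity) (one_le_pow₀ hY))
  refine prod_le_prod (fun _ _ => by positivity) fun p hp => ?_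
  push_cast
  exact pow_le_pow_left₀ p.cast_nonneg (not_lt.mp (mem_filter.mp hp).2) _

end SmoothRoughSplitting

open Real

lemma pow_le_rpow_mul_log {x L c : ℝ} {a : ℕ} (hx : 1 ≤ x) (hL : 0 < L)
    (ha : (a : ℝ) ≤ c * log L) : x ^ a ≤ L ^ (c * log x) := by
  rw [← rpow_natCast, rpow_def_of_pos (by linarith), rpow_def_of_pos hL, exp_le_exp]
  nlinarith [log_nonneg hx]

lemma smoothPart_le_Mval (k : ℕ) {X : ℝ} {n : ℕ} (hX : 1 < X) (hL : 0 < log (log X))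
    (hΩ : (bigOmega n : ℝ) ≤ 2 * k * log (log X)) :
    (smoothPart (X ^ (1 / log (log X) ^ 2)) n : ℝ) ≤ Mval k X := by
  set L := log (log X) with hL_def
  calc (smoothPart (X ^ (1 / L ^ 2)) n : ℝ)
      ≤ (X ^ (1 / L ^ 2)) ^ bigOmega n :=
        smoothPart_le_pow_bigOmega _ (one_le_rpow hX.le (by positivity))
    _ = X ^ (1 / L ^ 2 * bigOmega n) := by rw [rpow_mul (by linarith), rpow_natCast]
    _ ≤ X ^ (1 / L ^ 2 * (2 * k * L)) :=
        rpow_le_rpow_of_exponent_le hX.le (mul_le_mul_of_nonneg_left hΩ (by positivity))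
    _ = Mval k X := by rw [Mval, ← hL_def]; congr 1; field_simp

/-- Majorant property: for `k ≥ 2`, `ε' ∈ (0,1)` there are `C_k > 0` and `X₀`
such that for all `X ≥ X₀` and integers `X < n ≤ 2X`, writing `n = n₁ n₂` with `n₂` the
rough part of `n` at `X^(1/(log log X)^2)`: if `Ω(n) ≤ (1+ε')k log log X` and
`Ω(n₂) ≤ 10 log log log X` then `d_k(n) ≤ (log log X)^(C_k) · 𝑑̃_k(n)`. -/
theorem statement3 (k : ℕ) (hk : 2 ≤ k) (ε' : ℝ) (hε : ε' ∈ Set.Ioo (0 : ℝ) 1) :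
    ∃ C : ℝ, 0 < C ∧ ∃ X₀ : ℝ, ∀ X : ℝ, X₀ ≤ X → ∀ n : ℕ,
      X < (n : ℝ) → (n : ℝ) ≤ 2 * X →
      (bigOmega n : ℝ) ≤ (1 + ε') * k * Real.log (Real.log X) →
      (bigOmega (roughPart (X ^ (1 / Real.log (Real.log X) ^ 2)) n) : ℝ) ≤
          10 * Real.log (Real.log (Real.log X)) →
      (dk k n : ℝ) ≤ Real.log (Real.log X) ^ C * dtilde k ε' X n := by
  have hk1 : (1 : ℝ) < k := by exact_mod_cast hk
  refine ⟨10 * log k, by have := log_pos hk1; positivity, exp 2,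
    fun X hX₀ n hXn hn2X hΩn hΩrough => ?_⟩
  set L := log (log X)
  set Y := X ^ (1 / L ^ 2)
  have hlogX : 1 < log X := (lt_log_iff_exp_lt ((exp_pos 2).trans_le hX₀)).mpr
    ((exp_lt_exp.mpr one_lt_two).trans_le hX₀)
  have hX : 1 < X := (one_lt_exp_iff.mpr two_pos).trans_le hX₀
  have hL : 0 < L := log_pos hlogX
  have hn : n ≠ 0 := by rintro rfl; norm_num at hXn; linarith
  have hsplit := roughPart_mul_smoothPart Y hn
  have hdvd : smoothPart Y n ∣ n := Dvd.intro_left _ hsplit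
  have hΩ : (bigOmega n : ℝ) ≤ 2 * k * L := hΩn.trans (by gcongr; linarith [hε.2])
  have hrough : (dk k (roughPart Y n) : ℝ) ≤ L ^ (10 * log k) := by
    have hdk : (dk k (roughPart Y n) : ℝ) ≤ (k : ℝ) ^ bigOmega (roughPart Y n) := by
      exact_mod_cast dk_le_pow_bigOmega k (left_ne_zero_of_mul (hsplit ▸ hn))
    exact hdk.trans (pow_le_rpow_mul_log hk1.le hL hΩrough)
  have hsmooth := dk_le_sum_divisors_filter (k := k) (by omega) hn hdvd
    (fun m : ℕ => ((m : ℝ) ≤ Mval k X) ∧ (bigOmega m : ℝ) ≤ (1 + ε') * k * L)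
    fun d hd => ⟨(Nat.cast_le.mpr (Nat.divisor_le hd)).trans (smoothPart_le_Mval k hX hL hΩ),
      (Nat.cast_le.mpr (bigOmega_le_of_dvd hn ((Nat.dvd_of_mem_divisors hd).trans hdvd))).trans
        hΩn⟩
  rw [dtilde, if_pos ⟨hXn, hn2X⟩, one_mul]
  calc (dk k n : ℝ) = dk k (roughPart Y n) * dk k (smoothPart Y n) := by
        rw [← Nat.cast_mul, ← dk_mul_of_coprime k (coprime_roughPart_smoothPart Y), hsplit]
    _ ≤ _ := mul_le_mul hrough (by exact_mod_cast hsmooth) (by positivity) (by positivity)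
end

section
/- There is an absolute constant C > 0 such that for every integer N ≥ 1, ∑_{1 ≤ q_1, …, q_{10} ≤ N} 1/lcm(q_1, …, q_{10}) ≤ C N^{3/4}, where the sum is over all 10-tuples of positive integers each at most N. -/
/-!
Grouping the tuples by `L = lcm(q₁, …, q₁₀) ≤ N¹⁰`: every `qᵢ` divides `L`, so at most
`d(L)¹⁰` tuples have lcm `L`, and the sum is at most `∑_{L ≤ N¹⁰} d(L)¹⁰ / L`. Since `d` is
submultiplicative,
`d(n)^(k+1) / n = ∑_{ab = n} d(n)^k / (ab) ≤ ∑_{ab = n} (d(a)^k / a) (d(b)^k / b)`,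
so `∑_{n ≤ X} d(n)^(k+1) / n` is at most the square of `∑_{n ≤ X} d(n)^k / n`. Starting
from the harmonic sum this gives `∑_{n ≤ X} d(n)^k / n ≤ (1 + log X)^(2^k)`, a power of
`log N`, which is `O(N^{3/4})`.
-/

open Finset Real
open scoped Pointwise

lemma Nat.card_divisors_mul_le (m n : ℕ) : #(m * n).divisors ≤ #m.divisors * #n.divisors := by
  rw [Nat.divisors_mul]
  exact card_mul_le

lemma sum_divisorsAntidiagonal_mul_le_sq (f : ℕ → ℝ) (hf : ∀ n, 0 ≤ f n) (X : ℕ) :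
    ∑ n ∈ Icc 1 X, ∑ p ∈ n.divisorsAntidiagonal, f p.1 * f p.2 ≤
      (∑ n ∈ Icc 1 X, f n) ^ 2 := by
  have hdisj : (Icc 1 X : Set ℕ).PairwiseDisjoint Nat.divisorsAntidiagonal := by
    intro m _ n _ hmn
    refine disjoint_left.mpr fun p hm hn => hmn ?_
    rw [← (Nat.mem_divisorsAntidiagonal.mp hm).1, (Nat.mem_divisorsAntidiagonal.mp hn).1]
  have hsub : (Icc 1 X).biUnion Nat.divisorsAntidiagonal ⊆ Icc 1 X ×ˢ Icc 1 X := by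
    intro p hp
    obtain ⟨n, hn, hp⟩ := mem_biUnion.mp hp
    have hnX : n ≤ X := (mem_Icc.mp hn).2
    have h₁ := Nat.fst_mem_divisors_of_mem_antidiagonal hp
    have h₂ := Nat.snd_mem_divisors_of_mem_antidiagonal hp
    exact mem_product.mpr
      ⟨mem_Icc.mpr ⟨Nat.pos_of_mem_divisors h₁, (Nat.divisor_le h₁).trans hnX⟩,
        mem_Icc.mpr ⟨Nat.pos_of_mem_divisors h₂, (Nat.divisor_le h₂).trans hnX⟩⟩
  rw [← sum_biUnion hdisj, sq, sum_mul_sum, ← sum_product']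
  exact sum_le_sum_of_subset_of_nonneg hsub fun p _ _ => mul_nonneg (hf _) (hf _)

lemma sum_card_divisors_pow_succ_div_le_sq (k X : ℕ) :
    ∑ n ∈ Icc 1 X, (#n.divisors : ℝ) ^ (k + 1) / n ≤
      (∑ n ∈ Icc 1 X, (#n.divisors : ℝ) ^ k / n) ^ 2 := by
  calc ∑ n ∈ Icc 1 X, (#n.divisors : ℝ) ^ (k + 1) / n
      = ∑ n ∈ Icc 1 X, ∑ p ∈ n.divisorsAntidiagonal, (#n.divisors : ℝ) ^ k / n := by
        refine sum_congr rfl fun n _ => ?_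
        rw [Nat.sum_divisorsAntidiagonal fun _ _ => (#n.divisors : ℝ) ^ k / n, sum_const,
          nsmul_eq_mul, pow_succ]
        ring
    _ ≤ ∑ n ∈ Icc 1 X, ∑ p ∈ n.divisorsAntidiagonal,
          (#p.1.divisors : ℝ) ^ k / p.1 * ((#p.2.divisors : ℝ) ^ k / p.2) := by
        refine sum_le_sum fun n _ => sum_le_sum fun p hp => ?_
        obtain ⟨rfl, -⟩ := Nat.mem_divisorsAntidiagonal.mp hp
        rw [div_mul_div_comm, ← mul_pow, Nat.cast_mul]
        gcongr
        exact_mod_cast Nat.card_divisors_mul_le p.1 p.2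
    _ ≤ _ := sum_divisorsAntidiagonal_mul_le_sq (fun n => (#n.divisors : ℝ) ^ k / n)
          (fun n => by positivity) X

lemma sum_card_divisors_pow_div_le (X k : ℕ) :
    ∑ n ∈ Icc 1 X, (#n.divisors : ℝ) ^ k / n ≤ (1 + log X) ^ 2 ^ k := by
  induction k with
  | zero =>
    simpa [harmonic_eq_sum_Icc] using harmonic_le_one_add_log X
  | succ k ih =>
    calc ∑ n ∈ Icc 1 X, (#n.divisors : ℝ) ^ (k + 1) / n
        ≤ (∑ n ∈ Icc 1 X, (#n.divisors : ℝ) ^ k / n) ^ 2 :=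
          sum_card_divisors_pow_succ_div_le_sq k X
      _ ≤ ((1 + log X) ^ 2 ^ k) ^ 2 := by gcongr
      _ = (1 + log X) ^ 2 ^ (k + 1) := by rw [← pow_mul, pow_succ]

section Lcm

variable {ι : Type*} [Fintype ι] [DecidableEq ι]

lemma lcm_mem_Icc_of_mem_piFinset {N : ℕ} {t : ι → ℕ}
    (ht : t ∈ Fintype.piFinset fun _ => Icc 1 N) :
    univ.lcm t ∈ Icc 1 (N ^ Fintype.card ι) := by
  have hmem (i : ι) : t i ∈ Icc 1 N := Fintype.mem_piFinset.mp ht i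
  have hprod_pos : 0 < ∏ i, t i := prod_pos fun i _ => (mem_Icc.mp (hmem i)).1
  have hprod_le : ∏ i, t i ≤ N ^ Fintype.card ι := by
    simpa using prod_le_pow_card univ t N fun i _ => (mem_Icc.mp (hmem i)).2
  have hdvd : univ.lcm t ∣ ∏ i, t i := lcm_dvd_prod univ t
  exact mem_Icc.mpr ⟨Nat.pos_of_dvd_of_pos hdvd hprod_pos,
    (Nat.le_of_dvd hprod_pos hdvd).trans hprod_le⟩

lemma filter_lcm_eq_subset_piFinset_divisors (s : Finset (ι → ℕ)) {L : ℕ} (hL : L ≠ 0) :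
    {t ∈ s | univ.lcm t = L} ⊆ Fintype.piFinset fun _ => L.divisors := by
  intro t ht
  refine Fintype.mem_piFinset.mpr fun i => Nat.mem_divisors.mpr ⟨?_, hL⟩
  rw [← (mem_filter.mp ht).2]
  exact dvd_lcm (mem_univ i)

lemma sum_one_div_lcm_le_sum_card_divisors_pow (N : ℕ) :
    ∑ t ∈ Fintype.piFinset (fun _ : ι => Icc 1 N), (1 : ℝ) / (univ.lcm t : ℕ) ≤
      ∑ L ∈ Icc 1 (N ^ Fintype.card ι), (#L.divisors : ℝ) ^ Fintype.card ι / L := by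
  rw [← sum_fiberwise_of_maps_to fun _ => lcm_mem_Icc_of_mem_piFinset]
  refine sum_le_sum fun L hL => ?_
  have hL : L ≠ 0 := Nat.one_le_iff_ne_zero.mp (mem_Icc.mp hL).1
  set fiber := {t ∈ Fintype.piFinset (fun _ : ι => Icc 1 N) | univ.lcm t = L}
  have hcard : #fiber ≤ #L.divisors ^ Fintype.card ι := by
    simpa using card_le_card (filter_lcm_eq_subset_piFinset_divisors _ hL)
  calc ∑ t ∈ fiber, (1 : ℝ) / (univ.lcm t : ℕ)
      = #fiber * (1 / L) := by
        rw [sum_congr rfl fun t ht => by rw [(mem_filter.mp ht).2], sum_const, nsmul_eq_mul]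
    _ ≤ (#L.divisors : ℝ) ^ Fintype.card ι * (1 / L) := by gcongr; exact_mod_cast hcard
    _ = (#L.divisors : ℝ) ^ Fintype.card ι / L := mul_one_div _ _

end Lcm

lemma exists_one_add_log_pow_le_mul_rpow (K : ℕ) {δ : ℝ} (hδ : 0 < δ) :
    ∃ C > 0, ∀ x : ℝ, 1 ≤ x → (1 + log x) ^ K ≤ C * x ^ δ := by
  set ε := δ / (K + 1)
  have hε : 0 < ε := by positivity
  refine ⟨(1 + 1 / ε) ^ K, by positivity, fun x hx => ?_⟩
  have hbase : 1 + log x ≤ (1 + 1 / ε) * x ^ ε := by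
    have hlog := log_le_rpow_div (by linarith) hε
    have hone := one_le_rpow hx hε.le
    rw [add_mul, one_mul, one_div_mul_eq_div]
    linarith
  have hεK : ε * K ≤ δ := by
    rw [div_mul_eq_mul_div, div_le_iff₀ (by positivity)]
    nlinarith
  calc (1 + log x) ^ K ≤ ((1 + 1 / ε) * x ^ ε) ^ K := by
        gcongr
        linarith [log_nonneg hx]
    _ = (1 + 1 / ε) ^ K * x ^ (ε * K) := by rw [mul_pow, rpow_mul_natCast (by linarith)]
    _ ≤ (1 + 1 / ε) ^ K * x ^ δ := by gcongr

/-- there is an absolute `C > 0` such that for every integer `N ≥ 1`,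
`∑_{1 ≤ q₁, …, q₁₀ ≤ N} 1/lcm(q₁, …, q₁₀) ≤ C N^{3/4}`. -/
theorem statement14 : ∃ C : ℝ, 0 < C ∧ ∀ N : ℕ, 1 ≤ N →
    ∑ t ∈ Fintype.piFinset (fun _ : Fin 10 => Finset.Icc 1 N),
        (1 : ℝ) / (((Finset.univ : Finset (Fin 10)).lcm t : ℕ) : ℝ) ≤
      C * (N : ℝ) ^ ((3 : ℝ) / 4) := by
  obtain ⟨C, hC, hlog⟩ :=
    exists_one_add_log_pow_le_mul_rpow (2 ^ 10) (δ := 3 / 40) (by norm_num)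
  refine ⟨C, hC, fun N hN => ?_⟩
  have hX : (1 : ℝ) ≤ ((N ^ 10 : ℕ) : ℝ) := by exact_mod_cast Nat.one_le_pow _ _ hN
  calc _ ≤ ∑ L ∈ Icc 1 (N ^ 10), (#L.divisors : ℝ) ^ 10 / L := by
        simpa using sum_one_div_lcm_le_sum_card_divisors_pow (ι := Fin 10) N
    _ ≤ (1 + log (N ^ 10 : ℕ)) ^ 2 ^ 10 := sum_card_divisors_pow_div_le _ _
    _ ≤ C * ((N ^ 10 : ℕ) : ℝ) ^ (3 / 40 : ℝ) := hlog _ hX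
    _ = C * (N : ℝ) ^ ((3 : ℝ) / 4) := by
        rw [Nat.cast_pow, ← rpow_natCast_mul (by positivity)]
        norm_num
end
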